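/- arXiv:1703.04806 — 2 statements merged into one kernel-verified Lean document; each statement's English description precedes it below -/
import Mathlib

section
/- Let T = (S,Σ,κ) be an STS, μ a probability measure on S, and B ∈ Σ. If T is strongly decisive w.r.t. B from μ (SD(μ,B)), then T is fair w.r.t. B from μ: for every B' ∈ PreProb(B) with Prob_μ(GF B') > 0, one has Prob_μ(GF B ∩ GF B') = Prob_μ(GF B'). -/
/-!
By strong decisiveness, almost every path visits `B` infinitely often or enters the avoid-set
`B̃`, so it suffices that almost no path enters `B̃` and visits `B'` afterwards. If the cylinder
"in `B̃` at time `k`, in `B'` at time `m ≥ k`" had positive mass, the law of the state at time `m`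
conditioned on it would be concentrated on `B'`. Since `B' ∈ PreProb(B)`, the next step would
then hit `B` with positive probability, which is impossible after a visit to `B̃`.
-/

open MeasureTheory ProbabilityTheory ENNReal Filter Topology

namespace STS

variable {S : Type*} [MeasurableSpace S]

/-- Probability of the cylinder `Cyl(A 0, …, A n)` for the Markov chain with kernel `κ`
and initial distribution `μ`. -/
noncomputable def cylProb (κ : Kernel S S) : ℕ → Measure S → (ℕ → Set S) → ℝ≥0∞
  | 0, μ, A => μ (A 0)
  | n + 1, μ, A => ∫⁻ s in A 0, cylProb κ n (κ s) (fun i => A (i + 1)) ∂μ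

/-- `P` assigns to each initial (probability) distribution the path measure (on `ℕ → S`,
with the product σ-algebra) of the time-homogeneous Markov chain with transition kernel `κ`,
as given by the Ionescu–Tulcea construction: it is the unique probability measure giving
cylinders their prescribed probabilities. -/
def IsPathMeasure (κ : Kernel S S) (P : Measure S → Measure (ℕ → S)) : Prop :=
  ∀ μ : Measure S, IsProbabilityMeasure μ →
    IsProbabilityMeasure (P μ) ∧
    ∀ (n : ℕ) (A : ℕ → Set S), (∀ i, MeasurableSet (A i)) →
      P μ {ρ | ∀ i ≤ n, ρ i ∈ A i} = cylProb κ n μ A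

/-- The path event `F B`: eventually reach `B`. -/
def evF (B : Set S) : Set (ℕ → S) := {ρ | ∃ k, ρ k ∈ B}

/-- The path event `F≤n B`. -/
def evFle (n : ℕ) (B : Set S) : Set (ℕ → S) := {ρ | ∃ k ≤ n, ρ k ∈ B}

/-- The path event `F≥p B`. -/
def evFge (p : ℕ) (B : Set S) : Set (ℕ → S) := {ρ | ∃ k, p ≤ k ∧ ρ k ∈ B}

/-- The path event `GF B`: visit `B` infinitely often. -/
def evGF (B : Set S) : Set (ℕ → S) := {ρ | ∀ n, ∃ k, n ≤ k ∧ ρ k ∈ B}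

/-- The path event `FG B`: eventually stay in `B` forever. -/
def evFG (B : Set S) : Set (ℕ → S) := {ρ | ∃ n, ∀ k, n ≤ k → ρ k ∈ B}

/-- The until event `B' U B`. -/
def evU (B' B : Set S) : Set (ℕ → S) := {ρ | ∃ k, ρ k ∈ B ∧ ∀ j < k, ρ j ∈ B'}

/-- The bounded until event `B' U≤n B`. -/
def evUle (n : ℕ) (B' B : Set S) : Set (ℕ → S) := {ρ | ∃ k ≤ n, ρ k ∈ B ∧ ∀ j < k, ρ j ∈ B'}

/-- The avoid-set `B̃` of `B`: states from which `B` is reached with probability `0`. -/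
def avoid (P : Measure S → Measure (ℕ → S)) (B : Set S) : Set S :=
  {s | P (Measure.dirac s) (evF B) = 0}

/-- `T` is decisive w.r.t. `B` from `μ`. -/
def Decisive (P : Measure S → Measure (ℕ → S)) (μ : Measure S) (B : Set S) : Prop :=
  P μ (evF B ∪ evF (avoid P B)) = 1

/-- `T` is strongly decisive w.r.t. `B` from `μ`. -/
def StronglyDecisive (P : Measure S → Measure (ℕ → S)) (μ : Measure S) (B : Set S) : Prop :=
  P μ (evGF B ∪ evF (avoid P B)) = 1

/-- `T` is persistently decisive w.r.t. `B` from `μ`. -/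
def PersistentlyDecisive (P : Measure S → Measure (ℕ → S)) (μ : Measure S) (B : Set S) : Prop :=
  ∀ p : ℕ, P μ (evFge p B ∪ evFge p (avoid P B)) = 1

/-- `PreProb(B)`: measurable sets `B'` from which `B` is reached in one step with positive
probability, whatever the initial distribution concentrated on `B'`. -/
def PreProb (P : Measure S → Measure (ℕ → S)) (B : Set S) : Set (Set S) :=
  {B' | MeasurableSet B' ∧ ∀ μ' : Measure S, IsProbabilityMeasure μ' → μ' B' = 1 →
    0 < P μ' {ρ | ρ 0 ∈ B' ∧ ρ 1 ∈ B}}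

/-- `T` is fair w.r.t. `B` from `μ`. -/
def Fair (P : Measure S → Measure (ℕ → S)) (μ : Measure S) (B : Set S) : Prop :=
  ∀ B' ∈ PreProb P B, 0 < P μ (evGF B') →
    P μ (evGF B ∩ evGF B') = P μ (evGF B')

/-- The one-step measure transformer `Ω_T`. -/
noncomputable def Omega (κ : Kernel S S) (μ : Measure S) : Measure S :=
  μ.bind (fun s => κ s)

/-- Two measures are qualitatively equivalent if they have the same null (measurable) sets. -/
def QualEquiv {T : Type*} [MeasurableSpace T] (μ ν : Measure T) : Prop :=
  ∀ A : Set T, MeasurableSet A → (μ A = 0 ↔ ν A = 0)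

/-- `T₂ = (S₂,κ₂)` is an `α`-abstraction of `T₁ = (S₁,κ₁)`. -/
def IsAbstraction {S₁ S₂ : Type*} [MeasurableSpace S₁] [MeasurableSpace S₂]
    (κ₁ : Kernel S₁ S₁) (κ₂ : Kernel S₂ S₂) (α : S₁ → S₂) : Prop :=
  ∀ μ : Measure S₁, IsProbabilityMeasure μ →
    QualEquiv (Measure.map α (Omega κ₁ μ)) (Omega κ₂ (Measure.map α μ))

open Function

section Cylinders

variable {κ : Kernel S S}

lemma measurableSet_update {A : ℕ → Set S} (hA : ∀ i, MeasurableSet (A i)) {n : ℕ} {X : Set S}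
    (hX : MeasurableSet X) (i : ℕ) : MeasurableSet (update A n X i) :=
  (forall_update_iff A fun _ Y => MeasurableSet Y).2 ⟨hX, fun j _ => hA j⟩ i

lemma update_succ_comp_succ {α : Type*} (A : ℕ → α) (n : ℕ) (X : α) :
    (fun i => update A (n + 1) X (i + 1)) = update (fun i => A (i + 1)) n X :=
  update_comp_eq_of_injective A (add_left_injective 1) n X

lemma measurable_cylProb (n : ℕ) {A : ℕ → Set S} (hA : ∀ i, MeasurableSet (A i)) :
    Measurable fun μ : Measure S => cylProb κ n μ A := by
  induction n generalizing A with
  | zero => exact Measure.measurable_coe (hA 0)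
  | succ n ih =>
    simp only [cylProb, ← lintegral_indicator (hA 0)]
    exact Measure.measurable_lintegral
      (((ih fun i => hA (i + 1)).comp κ.measurable).indicator (hA 0))

lemma cylProb_succ_dirac {n : ℕ} {A : ℕ → Set S} (hA : ∀ i, MeasurableSet (A i)) {s : S}
    (hs : s ∈ A 0) :
    cylProb κ (n + 1) (Measure.dirac s) A = cylProb κ n (κ s) (fun i => A (i + 1)) := by
  classical
  rw [cylProb, restrict_dirac' (hA 0), if_pos hs]
  exact lintegral_dirac' _ ((measurable_cylProb n fun i => hA (i + 1)).comp κ.measurable)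

lemma measurable_restrict_measure {s : Set S} (hs : MeasurableSet s) :
    Measurable fun μ : Measure S => μ.restrict s :=
  Measure.measurable_of_measurable_coe _ fun t ht => by
    simpa only [Measure.restrict_apply ht] using Measure.measurable_coe (ht.inter hs)

/-- `cylMeasure κ n μ A E` is the mass of the cylinder `Cyl(A 0, …, A n)` whose last state lies
in `E` (see `cylMeasure_apply`); it follows the recursion of `cylProb`. -/
noncomputable def cylMeasure (κ : Kernel S S) : ℕ → Measure S → (ℕ → Set S) → Measure S
  | 0, μ, A => μ.restrict (A 0)
  | n + 1, μ, A => (μ.restrict (A 0)).bind fun s => cylMeasure κ n (κ s) fun i => A (i + 1)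

lemma measurable_cylMeasure (n : ℕ) {A : ℕ → Set S} (hA : ∀ i, MeasurableSet (A i)) :
    Measurable fun μ : Measure S => cylMeasure κ n μ A := by
  induction n generalizing A with
  | zero => exact measurable_restrict_measure (hA 0)
  | succ n ih =>
    exact (Measure.measurable_bind' ((ih fun i => hA (i + 1)).comp κ.measurable)).comp
      (measurable_restrict_measure (hA 0))

lemma cylMeasure_apply (n : ℕ) (μ : Measure S) {A : ℕ → Set S} (hA : ∀ i, MeasurableSet (A i))
    {E : Set S} (hE : MeasurableSet E) :
    cylMeasure κ n μ A E = cylProb κ n μ (update A n (A n ∩ E)) := by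
  induction n generalizing μ A with
  | zero => rw [cylMeasure, Measure.restrict_apply hE, cylProb, update_self, Set.inter_comm]
  | succ n ih =>
    have hmeas : Measurable fun s => cylMeasure κ n (κ s) fun i => A (i + 1) :=
      (measurable_cylMeasure n fun i => hA (i + 1)).comp κ.measurable
    rw [cylMeasure, Measure.bind_apply hE hmeas.aemeasurable, cylProb,
      update_of_ne (Nat.succ_ne_zero n).symm, update_succ_comp_succ]
    exact lintegral_congr fun s => ih (κ s) fun i => hA (i + 1)

lemma lintegral_cylMeasure (n : ℕ) (μ : Measure S) {A : ℕ → Set S}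
    (hA : ∀ i, MeasurableSet (A i)) {B : Set S} (hB : MeasurableSet B) :
    ∫⁻ s, κ s B ∂cylMeasure κ n μ A = cylProb κ (n + 1) μ (update A (n + 1) B) := by
  induction n generalizing μ A with
  | zero =>
    simp only [cylMeasure, cylProb, update_self, update_of_ne (Nat.succ_ne_zero 0).symm]
  | succ n ih =>
    have hmeas : Measurable fun s => cylMeasure κ n (κ s) fun i => A (i + 1) :=
      (measurable_cylMeasure n fun i => hA (i + 1)).comp κ.measurable
    rw [cylMeasure, Measure.lintegral_bind hmeas.aemeasurable (κ.measurable_coe hB).aemeasurable,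
      cylProb, update_of_ne (Nat.succ_ne_zero _).symm, update_succ_comp_succ]
    exact lintegral_congr fun s => ih (κ s) fun i => hA (i + 1)

end Cylinders

lemma measurableSet_evF {B : Set S} (hB : MeasurableSet B) : MeasurableSet (evF B) := by
  rw [evF, Set.ofPred_exists]
  exact .iUnion fun k => measurable_pi_apply k hB

lemma measurableSet_evGF {B : Set S} (hB : MeasurableSet B) : MeasurableSet (evGF B) := by
  simp only [evGF, Set.ofPred_forall, Set.ofPred_exists]
  exact .iInter fun n => .iUnion fun k => (MeasurableSet.const _).inter (measurable_pi_apply k hB)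

lemma pi_finset_eq_cyl {α : Type*} (I : Finset ℕ) (t : ℕ → Set α) :
    (I : Set ℕ).pi t = {ρ | ∀ i ≤ I.sup id, ρ i ∈ I.piecewise t (fun _ => Set.univ) i} := by
  ext ρ
  simp only [Set.mem_pi, Finset.mem_coe, Set.mem_ofPred_eq]
  refine ⟨fun h i _ => ?_, fun h i hi => by simpa [hi] using h i (Finset.le_sup (f := id) hi)⟩
  by_cases hi : i ∈ I <;> simp [hi, h]

section PathMeasure

variable {κ : Kernel S S} {P : Measure S → Measure (ℕ → S)}

lemma measurable_pathMeasure_dirac (hP : IsPathMeasure κ P) :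
    Measurable fun s => P (Measure.dirac s) := by
  have := fun s => (hP (Measure.dirac s) inferInstance).1
  refine .measure_of_isPiSystem_of_isProbabilityMeasure generateFrom_squareCylinders.symm
    (isPiSystem_squareCylinders (fun _ => MeasurableSpace.isPiSystem_measurableSet)
      fun _ => .univ) ?_
  rintro _ ⟨I, t, ht, rfl⟩
  have hA : ∀ i, MeasurableSet (I.piecewise t (fun _ => Set.univ) i) := fun i => by
    by_cases hi : i ∈ I
    · simpa [hi] using ht i (Set.mem_univ i)
    · simp [hi]
  simp_rw [pi_finset_eq_cyl, (hP _ inferInstance).2 _ _ hA]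
  exact (measurable_cylProb _ hA).comp Measure.measurable_dirac

lemma measurableSet_avoid (hP : IsPathMeasure κ P) {B : Set S} (hB : MeasurableSet B) :
    MeasurableSet (avoid P B) :=
  (Measure.measurable_coe (measurableSet_evF hB)).comp (measurable_pathMeasure_dirac hP)
    (measurableSet_singleton 0)

lemma cylProb_eq_zero_of_avoid (hP : IsPathMeasure κ P) {B : Set S} {k j : ℕ} (hkj : k < j)
    (μ : Measure S) {A : ℕ → Set S} (hA : ∀ i, MeasurableSet (A i)) (hk : A k ⊆ avoid P B)
    (hj : A j ⊆ B) : cylProb κ j μ A = 0 := by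
  obtain ⟨j, rfl⟩ : ∃ j', j = j' + 1 := Nat.exists_eq_succ_of_ne_zero (by omega)
  induction k generalizing j μ A with
  | zero =>
    have hnull : ∀ s ∈ A 0, cylProb κ j (κ s) (fun i => A (i + 1)) = 0 := fun s hs => by
      rw [← cylProb_succ_dirac hA hs, ← (hP _ inferInstance).2 _ _ hA]
      exact measure_mono_null (t := evF B) (fun ρ hρ => ⟨j + 1, hj (hρ _ le_rfl)⟩) (hk hs)
    rw [cylProb, setLIntegral_congr_fun (hA 0) hnull, lintegral_zero]
  | succ k ih =>
    obtain ⟨j, rfl⟩ : ∃ j', j = j' + 1 := Nat.exists_eq_succ_of_ne_zero (by omega)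
    rw [cylProb, lintegral_congr fun s => ih (κ s) (fun i => hA (i + 1)) hk j (by omega) hj,
      lintegral_zero]

/-- Conditioning `P μ` on a cylinder of positive mass that ends in `B'` gives a law concentrated
on `B'`, to which the defining property of `PreProb P B` applies. -/
lemma cylProb_succ_pos_of_mem_preProb (hP : IsPathMeasure κ P) {B B' : Set S}
    (hB : MeasurableSet B) (hB' : B' ∈ PreProb P B) {m : ℕ} (μ : Measure S) {A : ℕ → Set S}
    (hA : ∀ i, MeasurableSet (A i)) (hAm : A m ⊆ B') (hc : cylProb κ m μ A ≠ 0)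
    (hc' : cylProb κ m μ A ≠ ∞) : 0 < cylProb κ (m + 1) μ (update A (m + 1) B) := by
  set ν := (cylProb κ m μ A)⁻¹ • cylMeasure κ m μ A
  have hν : ∀ E, MeasurableSet E → A m ⊆ E → ν E = 1 := fun E hE hAE => by
    rw [Measure.smul_apply, cylMeasure_apply m μ hA hE, Set.inter_eq_left.2 hAE, update_eq_self,
      smul_eq_mul, ENNReal.inv_mul_cancel hc hc']
  have hνprob : IsProbabilityMeasure ν := ⟨hν _ .univ (Set.subset_univ _)⟩
  have hstep := hB'.2 ν hνprob (hν B' hB'.1 hAm)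
  have hcyl : {ρ : ℕ → S | ρ 0 ∈ B' ∧ ρ 1 ∈ B}
      = {ρ | ∀ i ≤ 1, ρ i ∈ update (fun _ => B) 0 B' i} := by
    ext ρ
    simp [Nat.le_one_iff_eq_zero_or_eq_one, or_imp, forall_and]
  rw [hcyl, (hP ν hνprob).2 1 _ (measurableSet_update (fun _ => hB) hB'.1)] at hstep
  have hle : cylProb κ 1 ν (update (fun _ => B) 0 B')
      ≤ (cylProb κ m μ A)⁻¹ * cylProb κ (m + 1) μ (update A (m + 1) B) :=
    calc cylProb κ 1 ν (update (fun _ => B) 0 B') = ∫⁻ s in B', κ s B ∂ν := rfl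
      _ ≤ ∫⁻ s, κ s B ∂ν := setLIntegral_le_lintegral _ _
      _ = _ := by rw [lintegral_smul_measure, lintegral_cylMeasure m μ hA hB, smul_eq_mul]
  exact (ENNReal.mul_pos_iff.1 (hstep.trans_le hle)).2

lemma pathMeasure_avoid_preProb_eq_zero (hP : IsPathMeasure κ P) {μ : Measure S}
    (hμ : IsProbabilityMeasure μ) {B B' : Set S} (hB : MeasurableSet B) (hB' : B' ∈ PreProb P B)
    {k m : ℕ} (hkm : k ≤ m) : P μ {ρ | ρ k ∈ avoid P B ∧ ρ m ∈ B'} = 0 := by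
  have := (hP μ hμ).1
  set A : ℕ → Set S := fun i =>
    (if i = k then avoid P B else Set.univ) ∩ (if i = m then B' else Set.univ)
  have hA : ∀ i, MeasurableSet (A i) := fun i => by
    simp only [A]
    split_ifs <;> simp [measurableSet_avoid hP hB, hB'.1]
  have hcyl : {ρ : ℕ → S | ρ k ∈ avoid P B ∧ ρ m ∈ B'} = {ρ | ∀ i ≤ m, ρ i ∈ A i} := by
    ext ρ
    simp only [A, Set.mem_ofPred_eq, Set.mem_inter_iff]
    refine ⟨fun ⟨hk, hm⟩ i _ => ⟨?_, ?_⟩, fun h => ⟨?_, ?_⟩⟩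
    · split_ifs with h <;> simp [h, hk]
    · split_ifs with h <;> simp [h, hm]
    · simpa using (h k hkm).1
    · simpa using (h m le_rfl).2
  rw [hcyl, (hP μ hμ).2 m A hA]
  by_contra hc
  have hfin : cylProb κ m μ A ≠ ∞ := (hP μ hμ).2 m A hA ▸ measure_ne_top _ _
  have hpos := cylProb_succ_pos_of_mem_preProb hP hB hB' μ hA
    (fun s hs => by simpa [A] using hs.2) hc hfin
  rw [cylProb_eq_zero_of_avoid hP (k := k) (by omega) μ (measurableSet_update hA hB)
    (by rw [update_of_ne (by omega)]; exact fun s hs => by simpa [A] using hs.1)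
    (by rw [update_self])] at hpos
  exact lt_irrefl 0 hpos

end PathMeasure

theorem statement_6_general {S : Type*} [MeasurableSpace S]
    (κ : Kernel S S)
    (P : Measure S → Measure (ℕ → S)) (hP : IsPathMeasure κ P)
    (μ : Measure S) (hμ : IsProbabilityMeasure μ)
    (B : Set S) (hB : MeasurableSet B)
    (hsd : StronglyDecisive P μ B) :
    ∀ B' ∈ PreProb P B, 0 < P μ (evGF B') →
      P μ (evGF B ∩ evGF B') = P μ (evGF B') := by
  intro B' hB' _
  have := (hP μ hμ).1
  have hdec : ∀ᵐ ρ ∂P μ, ρ ∈ evGF B ∪ evF (avoid P B) :=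
    (ae_mem_iff_measure_eq ((measurableSet_evGF hB).union
      (measurableSet_evF (measurableSet_avoid hP hB))).nullMeasurableSet).2
      (by rw [hsd, measure_univ])
  have hnull : ∀ᵐ ρ ∂P μ, ∀ k m, ¬(ρ k ∈ avoid P B ∧ ρ (k + m) ∈ B') := by
    simp only [ae_all_iff]
    exact fun k m => measure_eq_zero_iff_ae_notMem.1
      (pathMeasure_avoid_preProb_eq_zero hP hμ hB hB' (Nat.le_add_right k m))
  refine measure_congr (eventuallyEq_set.2 ?_)
  filter_upwards [hdec, hnull] with ρ hGF hnot
  refine ⟨And.right, fun hGF' => ⟨hGF.resolve_right fun ⟨k, hk⟩ => ?_, hGF'⟩⟩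
  obtain ⟨j, hkj, hj⟩ := hGF' k
  obtain ⟨m, rfl⟩ := Nat.exists_eq_add_of_le hkj
  exact hnot k m ⟨hk, hj⟩

/-- strong decisiveness w.r.t. `B` from `μ` implies fairness w.r.t. `B` from `μ`. -/
theorem statement_6 {S : Type*} [MeasurableSpace S]
    (κ : Kernel S S) [IsMarkovKernel κ]
    (P : Measure S → Measure (ℕ → S)) (hP : IsPathMeasure κ P)
    (μ : Measure S) (hμ : IsProbabilityMeasure μ)
    (B : Set S) (hB : MeasurableSet B)
    (hsd : StronglyDecisive P μ B) :
    ∀ B' ∈ PreProb P B, 0 < P μ (evGF B') →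
      P μ (evGF B ∩ evGF B') = P μ (evGF B') :=
  statement_6_general κ P hP μ hμ B hB hsd

end STS
end

section
/- Let T₁ = (S₁,Σ₁,κ₁) and T₂ = (S₂,Σ₂,κ₂) be STSs and α : S₁ → S₂ a measurable map such that T₂ is an α-abstraction of T₁. Then for every B ∈ Σ₂, the avoid-set in T₁ of α⁻¹(B) equals the preimage under α of the avoid-set in T₂ of B: {s ∈ S₁ | Prob^{T₁}_{δ_s}(F α⁻¹(B)) = 0} = α⁻¹({t ∈ S₂ | Prob^{T₂}_{δ_t}(F B) = 0}). -/
/-! `P μ (F C) = 0` iff the `n`-step law `Ω^n μ` does not charge `C` for any `n`, so the avoid-set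
of `C` only depends on the null sets of the measures `Ω^n δ_s`. The map `Ω` preserves qualitative
equivalence, because `Ω μ A = 0` iff `μ` does not charge the measurable set `{s | κ s A ≠ 0}`.
Hence, by induction on `n`, an `α`-abstraction makes `α_# (Ω₁^n δ_s)` and `Ω₂^n δ_{α s}`
qualitatively equivalent, and evaluating both at `B` gives the claim. -/

open MeasureTheory ProbabilityTheory ENNReal Filter Topology

namespace STS

variable {S : Type*} [MeasurableSpace S]

section Omega

variable (κ : Kernel S S)

lemma omega_apply {μ : Measure S} {A : Set S} (hA : MeasurableSet A) :
    Omega κ μ A = ∫⁻ s, κ s A ∂μ :=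
  Measure.bind_apply hA κ.measurable.aemeasurable

lemma omega_apply_eq_zero_iff {μ : Measure S} {A : Set S} (hA : MeasurableSet A) :
    Omega κ μ A = 0 ↔ μ {s | κ s A ≠ 0} = 0 := by
  rw [omega_apply κ hA, lintegral_eq_zero_iff (κ.measurable_coe hA), Filter.EventuallyEq, ae_iff]
  rfl

instance isProbabilityMeasure_omega [IsMarkovKernel κ] (μ : Measure S) [IsProbabilityMeasure μ] :
    IsProbabilityMeasure (Omega κ μ) :=
  isProbabilityMeasure_bind κ.measurable.aemeasurable (ae_of_all _ fun _ => inferInstance)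

lemma isProbabilityMeasure_omega_iterate [IsMarkovKernel κ] (n : ℕ) (μ : Measure S)
    [IsProbabilityMeasure μ] : IsProbabilityMeasure ((Omega κ)^[n] μ) := by
  induction n with
  | zero => assumption
  | succ n ih => rw [Function.iterate_succ_apply']; infer_instance

lemma measurable_cylProb_kernel [IsSFiniteKernel κ] (n : ℕ) {A : ℕ → Set S}
    (hA : ∀ i, MeasurableSet (A i)) : Measurable fun s => cylProb κ n (κ s) A := by
  induction n generalizing A with
  | zero => exact κ.measurable_coe (hA 0)
  | succ n ih => exact (ih fun i => hA (i + 1)).setLIntegral_kernel (hA 0)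

lemma cylProb_omega [IsSFiniteKernel κ] (n : ℕ) (μ : Measure S) {A : ℕ → Set S}
    (hA : ∀ i, MeasurableSet (A i)) :
    cylProb κ n (Omega κ μ) A = ∫⁻ s, cylProb κ n (κ s) A ∂μ := by
  cases n with
  | zero => exact omega_apply κ (hA 0)
  | succ n =>
    simp only [cylProb, ← lintegral_indicator (hA 0)]
    exact Measure.lintegral_bind κ.measurable.aemeasurable
      ((measurable_cylProb_kernel κ n fun i => hA (i + 1)).indicator (hA 0)).aemeasurable

lemma cylProb_eq_omega_iterate [IsSFiniteKernel κ] (n : ℕ) (μ : Measure S) {C : Set S}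
    (hC : MeasurableSet C) :
    cylProb κ n μ (fun i => if i = n then C else Set.univ) = (Omega κ)^[n] μ C := by
  induction n generalizing μ with
  | zero => simp [cylProb]
  | succ n ih =>
    have hshift : (fun i => if i + 1 = n + 1 then C else Set.univ) =
        fun i => if i = n then C else Set.univ := by simp
    have hA : ∀ i, MeasurableSet (if i = n then C else Set.univ) := fun i => by
      split_ifs <;> simp [hC]
    simp only [cylProb, if_neg (Nat.succ_ne_zero n).symm, Measure.restrict_univ, hshift]
    rw [Function.iterate_succ_apply, ← ih, cylProb_omega κ n μ hA]

end Omega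

lemma IsPathMeasure.apply_coord_mem {κ : Kernel S S} [IsSFiniteKernel κ]
    {P : Measure S → Measure (ℕ → S)} (hP : IsPathMeasure κ P) {μ : Measure S}
    [IsProbabilityMeasure μ] (n : ℕ) {C : Set S} (hC : MeasurableSet C) :
    P μ {ρ | ρ n ∈ C} = (Omega κ)^[n] μ C := by
  have hcyl : {ρ : ℕ → S | ρ n ∈ C} =
      {ρ | ∀ i ≤ n, ρ i ∈ if i = n then C else Set.univ} := by
    ext ρ
    refine ⟨fun h i _ => ?_, fun h => by simpa using h n le_rfl⟩
    split_ifs with hi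
    exacts [hi ▸ h, trivial]
  rw [hcyl, (hP μ ‹_›).2 n _ fun i => by split_ifs <;> simp [hC],
    cylProb_eq_omega_iterate κ n μ hC]

lemma IsPathMeasure.apply_evF_eq_zero_iff {κ : Kernel S S} [IsSFiniteKernel κ]
    {P : Measure S → Measure (ℕ → S)} (hP : IsPathMeasure κ P) {μ : Measure S}
    [IsProbabilityMeasure μ] {C : Set S} (hC : MeasurableSet C) :
    P μ (evF C) = 0 ↔ ∀ n, (Omega κ)^[n] μ C = 0 := by
  have hF : evF C = ⋃ n, {ρ : ℕ → S | ρ n ∈ C} := by ext; simp [evF]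
  simp only [hF, measure_iUnion_null_iff, hP.apply_coord_mem _ hC]

namespace QualEquiv

variable {T : Type*} [MeasurableSpace T] {μ ν ξ : Measure T}

lemma trans (h₁ : QualEquiv μ ν) (h₂ : QualEquiv ν ξ) : QualEquiv μ ξ :=
  fun A hA => (h₁ A hA).trans (h₂ A hA)

lemma omega (κ : Kernel T T) (h : QualEquiv μ ν) : QualEquiv (Omega κ μ) (Omega κ ν) :=
  fun A hA => by
    simp only [omega_apply_eq_zero_iff κ hA]
    exact h _ (measurableSet_eq_fun (κ.measurable_coe hA) measurable_const).compl

end QualEquiv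

lemma IsAbstraction.qualEquiv_iterate {S₁ S₂ : Type*} [MeasurableSpace S₁] [MeasurableSpace S₂]
    {κ₁ : Kernel S₁ S₁} [IsMarkovKernel κ₁] {κ₂ : Kernel S₂ S₂} {α : S₁ → S₂}
    (habs : IsAbstraction κ₁ κ₂ α) (μ : Measure S₁) [IsProbabilityMeasure μ] (n : ℕ) :
    QualEquiv (Measure.map α ((Omega κ₁)^[n] μ)) ((Omega κ₂)^[n] (Measure.map α μ)) := by
  induction n with
  | zero => exact fun _ _ => Iff.rfl
  | succ n ih =>
    simp only [Function.iterate_succ_apply']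
    exact (habs _ (isProbabilityMeasure_omega_iterate κ₁ n μ)).trans (ih.omega κ₂)

/-- under an `α`-abstraction, the avoid-set of `α⁻¹(B)` in `T₁` is the
preimage under `α` of the avoid-set of `B` in `T₂`. -/
theorem statement_8 {S₁ S₂ : Type*} [MeasurableSpace S₁] [MeasurableSpace S₂]
    (κ₁ : Kernel S₁ S₁) [IsMarkovKernel κ₁] (κ₂ : Kernel S₂ S₂) [IsMarkovKernel κ₂]
    (P₁ : Measure S₁ → Measure (ℕ → S₁)) (hP₁ : IsPathMeasure κ₁ P₁)
    (P₂ : Measure S₂ → Measure (ℕ → S₂)) (hP₂ : IsPathMeasure κ₂ P₂)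
    (α : S₁ → S₂) (hα : Measurable α) (habs : IsAbstraction κ₁ κ₂ α) :
    ∀ B : Set S₂, MeasurableSet B →
      avoid P₁ (α ⁻¹' B) = α ⁻¹' (avoid P₂ B) := by
  intro B hB
  ext s
  change P₁ (Measure.dirac s) (evF (α ⁻¹' B)) = 0 ↔ P₂ (Measure.dirac (α s)) (evF B) = 0
  rw [hP₁.apply_evF_eq_zero_iff (hα hB), hP₂.apply_evF_eq_zero_iff hB,
    ← Measure.map_dirac' hα s]
  refine forall_congr' fun n => ?_
  rw [← Measure.map_apply hα hB]
  exact habs.qualEquiv_iterate _ n B hB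

end STS
end
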